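/- There exists a simple graph on 13 vertices that does not contain the wheel W_7 as a (not necessarily induced) subgraph and whose complement does not contain the wheel W_5 as a (not necessarily induced) subgraph. -/

import Mathlib

open SimpleGraph

/-- `ContainsCopy G H` means the graph `H` contains a copy of `G` as a
(not necessarily induced) subgraph. -/
def ContainsCopy {α β : Type*} (G : SimpleGraph α) (H : SimpleGraph β) : Prop :=
  ∃ f : α → β, Function.Injective f ∧ ∀ ⦃u v : α⦄, G.Adj u v → H.Adj (f u) (f v)

/-- The join `G + H` of two graphs: take disjoint copies of `G` and `H` and add
all edges between them. -/
def graphJoin {α β : Type*} (G : SimpleGraph α) (H : SimpleGraph β) :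
    SimpleGraph (α ⊕ β) where
  Adj u v :=
    match u, v with
    | .inl a, .inl b => G.Adj a b
    | .inr a, .inr b => H.Adj a b
    | .inl _, .inr _ => True
    | .inr _, .inl _ => True
  symm := by
    constructor
    intro u v h
    cases u <;> cases v <;> simp_all <;> exact h.symm
  loopless := by
    constructor
    intro u
    cases u <;> simp

/-- The wheel `W n`: the join of a single vertex with a cycle on `n - 1` vertices. -/
def wheelGraph (n : ℕ) : SimpleGraph (Fin 1 ⊕ Fin (n - 1)) :=
  graphJoin (⊥ : SimpleGraph (Fin 1)) (cycleGraph (n - 1))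

/-- The book `B n`: the join of an edge `K₂` with an empty graph on `n` vertices. -/
def bookGraph (n : ℕ) : SimpleGraph (Fin 2 ⊕ Fin n) :=
  graphJoin (⊤ : SimpleGraph (Fin 2)) (⊥ : SimpleGraph (Fin n))

/-- The two-colour graph Ramsey number `R(G₁, G₂)`: the least `n` such that every
simple graph `G` on `n` vertices contains a copy of `G₁`, or its complement
contains a copy of `G₂`. -/
noncomputable def ramseyNumber {α β : Type*} (G₁ : SimpleGraph α) (G₂ : SimpleGraph β) : ℕ :=
  sInf {n : ℕ | ∀ G : SimpleGraph (Fin n), ContainsCopy G₁ G ∨ ContainsCopy G₂ Gᶜ}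

/-- Rows of the adjacency matrix of our witness graph, as bitmasks. -/
def critMask : Fin 13 → Nat
  | 0 => 6048 | 1 => 3736 | 2 => 3736 | 3 => 6774 | 4 => 2318 | 5 => 1481
  | 6 => 6568 | 7 => 5735 | 8 => 5233 | 9 => 2191 | 10 => 4519 | 11 => 4702
  | 12 => 3529


lemma critMask_symm : ∀ u v : Fin 13,
    Nat.testBit (critMask u) v.val = true → Nat.testBit (critMask v) u.val = true := by decide

lemma critMask_irrefl : ∀ v : Fin 13, ¬ Nat.testBit (critMask v) v.val = true := by decide

def critG : SimpleGraph (Fin 13) where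
  Adj u v := Nat.testBit (critMask u) v.val = true
  symm := ⟨fun u v h => critMask_symm u v h⟩
  loopless := ⟨fun v h => critMask_irrefl v h⟩

instance : DecidableRel critG.Adj := fun _ _ => instDecidableEqBool _ _

set_option synthInstance.maxSize 5000 in
set_option synthInstance.maxHeartbeats 2000000 in
lemma critG_no_hub_C6 : ∀ v a0 : Fin 13, critG.Adj v a0 →
    ∀ a1, critG.Adj v a1 → critG.Adj a0 a1 →
    ∀ a2, critG.Adj v a2 → critG.Adj a1 a2 → a2 ≠ a0 →
    ∀ a3, critG.Adj v a3 → critG.Adj a2 a3 → a3 ≠ a0 → a3 ≠ a1 →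
    ∀ a4, critG.Adj v a4 → critG.Adj a3 a4 → a4 ≠ a0 → a4 ≠ a1 → a4 ≠ a2 →
    ∀ a5, critG.Adj v a5 → critG.Adj a4 a5 → a5 ≠ a0 → a5 ≠ a1 → a5 ≠ a2 → a5 ≠ a3 →
    ¬ critG.Adj a5 a0 := by decide

set_option synthInstance.maxSize 5000 in
set_option synthInstance.maxHeartbeats 2000000 in
lemma critGc_no_hub_C4 : ∀ v a0 : Fin 13, v ≠ a0 → ¬ critG.Adj v a0 →
    ∀ a1, v ≠ a1 → ¬ critG.Adj v a1 → a0 ≠ a1 → ¬ critG.Adj a0 a1 →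
    ∀ a2, v ≠ a2 → ¬ critG.Adj v a2 → a1 ≠ a2 → ¬ critG.Adj a1 a2 → a2 ≠ a0 →
    ∀ a3, v ≠ a3 → ¬ critG.Adj v a3 → a2 ≠ a3 → ¬ critG.Adj a2 a3 → a3 ≠ a0 → a3 ≠ a1 →
    a3 = a0 ∨ critG.Adj a3 a0 := by decide

/-- There is a simple graph on 13 vertices not containing the wheel `W₇` as a
subgraph, whose complement does not contain the wheel `W₅` as a subgraph. -/
theorem exists_critical_graph_W5_W7 :
    ∃ G : SimpleGraph (Fin 13),
      ¬ ContainsCopy (wheelGraph 7) G ∧ ¬ ContainsCopy (wheelGraph 5) Gᶜ := by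
  refine ⟨critG, ?_, ?_⟩
  · rintro ⟨f, finj, hf⟩
    set v := f (.inl 0) with hv
    set a : Fin 6 → Fin 13 := fun i => f (.inr i) with ha
    have hva : ∀ i : Fin 6, critG.Adj v (a i) := fun i =>
      hf (u := Sum.inl 0) (v := Sum.inr i) trivial
    have he : ∀ i j : Fin 6, (cycleGraph 6).Adj i j → critG.Adj (a i) (a j) := fun i j h =>
      hf (u := Sum.inr i) (v := Sum.inr j) h
    have hne : ∀ i j : Fin 6, i ≠ j → a i ≠ a j := by
      intro i j hij h
      exact hij (Sum.inr.inj (finj h))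
    exact critG_no_hub_C6 v (a 0) (hva 0)
      (a 1) (hva 1) (he 0 1 (by decide))
      (a 2) (hva 2) (he 1 2 (by decide)) (hne 2 0 (by decide))
      (a 3) (hva 3) (he 2 3 (by decide)) (hne 3 0 (by decide)) (hne 3 1 (by decide))
      (a 4) (hva 4) (he 3 4 (by decide)) (hne 4 0 (by decide)) (hne 4 1 (by decide))
        (hne 4 2 (by decide))
      (a 5) (hva 5) (he 4 5 (by decide)) (hne 5 0 (by decide)) (hne 5 1 (by decide))
        (hne 5 2 (by decide)) (hne 5 3 (by decide))
      (he 5 0 (by decide))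
  · rintro ⟨f, finj, hf⟩
    set v := f (.inl 0) with hv
    set a : Fin 4 → Fin 13 := fun i => f (.inr i) with ha
    have hva : ∀ i : Fin 4, critGᶜ.Adj v (a i) := fun i =>
      hf (u := Sum.inl 0) (v := Sum.inr i) trivial
    have he : ∀ i j : Fin 4, (cycleGraph 4).Adj i j → critGᶜ.Adj (a i) (a j) := fun i j h =>
      hf (u := Sum.inr i) (v := Sum.inr j) h
    have hne : ∀ i j : Fin 4, i ≠ j → a i ≠ a j := by
      intro i j hij h
      exact hij (Sum.inr.inj (finj h))
    have hva' : ∀ i : Fin 4, v ≠ a i ∧ ¬ critG.Adj v (a i) := fun i =>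
      (SimpleGraph.compl_adj critG v (a i)).mp (hva i)
    have he' : ∀ i j : Fin 4, (cycleGraph 4).Adj i j → a i ≠ a j ∧ ¬ critG.Adj (a i) (a j) :=
      fun i j h => (SimpleGraph.compl_adj critG (a i) (a j)).mp (he i j h)
    have h30 := he' 3 0 (by decide)
    rcases critGc_no_hub_C4 v (a 0) (hva' 0).1 (hva' 0).2
      (a 1) (hva' 1).1 (hva' 1).2 (he' 0 1 (by decide)).1 (he' 0 1 (by decide)).2
      (a 2) (hva' 2).1 (hva' 2).2 (he' 1 2 (by decide)).1 (he' 1 2 (by decide)).2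
        (hne 2 0 (by decide))
      (a 3) (hva' 3).1 (hva' 3).2 (he' 2 3 (by decide)).1 (he' 2 3 (by decide)).2
        (hne 3 0 (by decide)) (hne 3 1 (by decide)) with h | h
    · exact h30.1 h
    · exact h30.2 h
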